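/- Every strict quotient map between game trees is a quotient map, but there exists a quotient map in the category of game trees and chronological maps that is not a strict quotient map. -/

import Mathlib

open Classical

/-- A game tree over `M`: a set of finite sequences closed under truncation,
in which every element admits a one-step extension. -/
def IsGameTree {M : Type*} (T : Set (List M)) : Prop :=
  (∀ t ∈ T, ∀ k ≤ t.length, t.take k ∈ T) ∧ (∀ t ∈ T, ∃ x : M, t ++ [x] ∈ T)

/-- The initial segment of length `n` of an infinite sequence. -/
def runPre {M : Type*} (R : ℕ → M) (n : ℕ) : List M := List.ofFn fun i : Fin n => R i.1

/-- The runs (branches) of a game tree. -/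
def GameRun {M : Type*} (T : Set (List M)) : Set (ℕ → M) := {R | ∀ n : ℕ, runPre R n ∈ T}

/-- A chronological map between game trees: preserves length and truncation. -/
def IsChron {M N : Type*} (T₁ : Set (List M)) (T₂ : Set (List N))
    (f : List M → List N) : Prop :=
  (∀ t ∈ T₁, f t ∈ T₂) ∧ (∀ t ∈ T₁, (f t).length = t.length) ∧
    (∀ t ∈ T₁, ∀ k ≤ t.length, f (t.take k) = (f t).take k)

/-- `Δ(R,R')`: the least index where two infinite sequences differ (`⊤` if equal). -/
noncomputable def runDelta {M : Type*} (R R' : ℕ → M) : ℕ∞ :=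
  sInf ((fun n : ℕ => (n : ℕ∞)) '' {n : ℕ | R n ≠ R' n})

/-- The ultrametric `d_T` on runs: `1/(Δ(R,R')+1)` for distinct runs, `0` otherwise. -/
noncomputable def runDist {M : Type*} (R R' : ℕ → M) : ℝ :=
  if R = R' then 0 else (((runDelta R R').toNat : ℝ) + 1)⁻¹

/-- A quotient map between game trees: a surjective chronological map such that
moments of equal length are identified iff they are connected by a chain of runs
as in the definition of quotient maps. -/
def ChronQuotient {M N : Type*} (T : Set (List M)) (Q : Set (List N))
    (q : List M → List N) : Prop :=
  (∀ s ∈ Q, ∃ t ∈ T, q t = s) ∧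
    ∀ N' : ℕ, ∀ t ∈ T, ∀ s ∈ T, t.length = N' → s.length = N' →
      (q t = q s ↔ ∃ n : ℕ, ∃ R : ℕ → (ℕ → M),
        (∀ i ≤ n, R i ∈ GameRun T) ∧
        t = runPre (R 0) N' ∧ s = runPre (R n) N' ∧
        (∀ i : ℕ, 2 * i + 1 ≤ n → (N' : ℕ∞) ≤ runDelta (R (2 * i)) (R (2 * i + 1))) ∧
        (∀ i : ℕ, 2 * i + 2 ≤ n →
          ∀ m : ℕ, q (runPre (R (2 * i + 1)) m) = q (runPre (R (2 * i + 2)) m)))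

/-- A strict quotient map between game trees: the induced map on runs is surjective
and distinct runs downstairs lift to runs upstairs with the same Δ. -/
def StrictChronQuotient {M N : Type*} (T : Set (List M)) (Q : Set (List N))
    (q : List M → List N) : Prop :=
  (∀ R' ∈ GameRun Q, ∃ R ∈ GameRun T, ∀ n : ℕ, runPre R' n = q (runPre R n)) ∧
    ∀ R' ∈ GameRun Q, ∀ S' ∈ GameRun Q, R' ≠ S' →
      ∃ R ∈ GameRun T, ∃ S ∈ GameRun T,
        (∀ n : ℕ, runPre R' n = q (runPre R n)) ∧
        (∀ n : ℕ, runPre S' n = q (runPre S n)) ∧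
        runDelta R S = runDelta R' S'

/-!
If `q t = q s`, extend `t` and `s` to runs, push these down to runs of `Q`, and lift the two
image runs back to runs `S`, `S'` of `T` with `Δ(S, S') = Δ` of the images, which is at least the
length of `t`. Then `t, S, S', s` is a chain of the required shape, so a strict quotient map is a
quotient map.

For the converse, let `T` consist of the runs `00…`, `11…`, `02…`, `12…` and let `q` forget the
first move. Moments of length at most one are linked through the bridge runs `02…` and `12…`,
which have the same image, and longer moments with the same image lie on runs with the same image,
so `q` is a quotient map. But the runs `00…` and `01…` of `Q` agree on their first move, whereas
their only lifts `00…` and `11…` do not, so `q` is not strict.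
-/

section Runs

variable {M : Type*}

@[simp]
theorem runPre_length (R : ℕ → M) (n : ℕ) : (runPre R n).length = n := by
  simp [runPre]

@[simp]
theorem runPre_getElem (R : ℕ → M) {n i : ℕ} (h : i < (runPre R n).length) :
    (runPre R n)[i] = R i := by
  simp [runPre]

theorem runPre_succ (R : ℕ → M) (n : ℕ) : runPre R (n + 1) = runPre R n ++ [R n] := by
  rw [runPre, List.ofFn_succ_last]; rfl

theorem runPre_take (R : ℕ → M) (n k : ℕ) : (runPre R n).take k = runPre R (min k n) :=
  List.ext_getElem (by simp) fun _ _ _ => by simp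

theorem runPre_eq_runPre_iff {R S : ℕ → M} {n : ℕ} :
    runPre R n = runPre S n ↔ ∀ i < n, R i = S i := by
  simp only [runPre, List.ofFn_inj, funext_iff, Fin.forall_iff]

theorem le_runDelta_iff {R S : ℕ → M} {n : ℕ} :
    (n : ℕ∞) ≤ runDelta R S ↔ runPre R n = runPre S n := by
  rw [runPre_eq_runPre_iff, runDelta, le_sInf_iff, Set.forall_mem_image]
  refine forall_congr' fun i => ?_
  rw [Set.mem_ofPred_eq, Nat.cast_le, ← not_imp_not, not_le, not_ne_iff]

@[simp]
theorem runDelta_self (R : ℕ → M) : runDelta R R = ⊤ := by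
  simp [runDelta]

theorem exists_runPre_eq {ℓ : ℕ → List M} (hlen : ∀ n, (ℓ n).length = n)
    (htake : ∀ n, (ℓ (n + 1)).take n = ℓ n) : ∃ R : ℕ → M, ∀ n, runPre R n = ℓ n := by
  have hlast : ∀ n, ∃ x, ℓ (n + 1) = ℓ n ++ [x] := fun n => by
    obtain ⟨x, hx⟩ := List.length_eq_one_iff.mp
      (show ((ℓ (n + 1)).drop n).length = 1 by simp [hlen])
    exact ⟨x, by rw [← htake n, ← hx, List.take_append_drop]⟩
  choose R hR using hlast
  refine ⟨R, fun n => ?_⟩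
  induction n with
  | zero => exact (List.eq_nil_of_length_eq_zero (hlen 0)).symm
  | succ n ih => rw [runPre_succ, ih, hR]

end Runs

section GameTrees

variable {M N : Type*} {T : Set (List M)} {Q : Set (List N)} {q : List M → List N}

theorem IsGameTree.exists_run_runPre_eq (hT : IsGameTree T) {t : List M} (ht : t ∈ T) :
    ∃ R ∈ GameRun T, runPre R t.length = t := by
  choose next hnext using hT.2
  let extend : {u // u ∈ T} → {u // u ∈ T} := fun u => ⟨u.1 ++ [next u.1 u.2], hnext _ u.2⟩
  let u : ℕ → {u // u ∈ T} := fun n => extend^[n] ⟨t, ht⟩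
  let R : ℕ → M := fun i => if h : i < t.length then t[i] else next (u (i - t.length)).1 (u _).2
  have hR : runPre R t.length = t := List.ext_getElem (by simp) fun i hi _ => by
    simp_all [R]
  have hRu : ∀ n, runPre R (t.length + n) = (u n).1 := by
    intro n
    induction n with
    | zero => exact hR
    | succ n ih =>
      rw [← add_assoc, runPre_succ, ih]
      simp [R, u, Function.iterate_succ_apply', extend]
  refine ⟨R, fun n => ?_, hR⟩
  have hpre := hT.1 _ (u n).2 n (by rw [← hRu]; simp)
  rwa [← hRu, runPre_take, min_eq_left (by omega)] at hpre

theorem IsChron.exists_run_runPre_eq_map (hq : IsChron T Q q) {R : ℕ → M}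
    (hR : R ∈ GameRun T) : ∃ S ∈ GameRun Q, ∀ n, runPre S n = q (runPre R n) := by
  obtain ⟨S, hS⟩ := exists_runPre_eq (ℓ := fun n => q (runPre R n))
    (fun n => by rw [hq.2.1 _ (hR n), runPre_length])
    (fun n => by
      rw [← hq.2.2 _ (hR (n + 1)) n (by simp), runPre_take, min_eq_left (by omega)])
  exact ⟨S, fun n => hS n ▸ hq.1 _ (hR n), hS⟩

theorem StrictChronQuotient.exists_lifts_runDelta_eq (hq : StrictChronQuotient T Q q)
    {R' S' : ℕ → N} (hR' : R' ∈ GameRun Q) (hS' : S' ∈ GameRun Q) :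
    ∃ R ∈ GameRun T, ∃ S ∈ GameRun T, (∀ n, runPre R' n = q (runPre R n)) ∧
      (∀ n, runPre S' n = q (runPre S n)) ∧ runDelta R S = runDelta R' S' := by
  by_cases h : R' = S'
  · subst h
    obtain ⟨R, hR, hRR'⟩ := hq.1 R' hR'
    exact ⟨R, hR, R, hR, hRR', hRR', by simp⟩
  · exact hq.2 R' hR' S' hS' h

end GameTrees

section Chains

variable {M N : Type*} {T : Set (List M)} {Q : Set (List N)} {q : List M → List N}

/-- The right-hand side of the defining equivalence of `ChronQuotient`. -/
def RunChainLinked (T : Set (List M)) (q : List M → List N) (n' : ℕ) (t s : List M) : Prop :=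
  ∃ n : ℕ, ∃ R : ℕ → (ℕ → M),
    (∀ i ≤ n, R i ∈ GameRun T) ∧
    t = runPre (R 0) n' ∧ s = runPre (R n) n' ∧
    (∀ i : ℕ, 2 * i + 1 ≤ n → (n' : ℕ∞) ≤ runDelta (R (2 * i)) (R (2 * i + 1))) ∧
    (∀ i : ℕ, 2 * i + 2 ≤ n →
      ∀ m : ℕ, q (runPre (R (2 * i + 1)) m) = q (runPre (R (2 * i + 2)) m))

theorem RunChainLinked.map_eq {n' : ℕ} {t s : List M} (h : RunChainLinked T q n' t s) :
    q t = q s := by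
  obtain ⟨n, R, -, rfl, rfl, hΔ, hq⟩ := h
  induction n with
  | zero => rfl
  | succ k ih =>
    rw [ih (fun i hi => hΔ i (by omega)) fun i hi => hq i (by omega)]
    obtain ⟨i, rfl | rfl⟩ := Nat.even_or_odd' k
    · exact congrArg q (le_runDelta_iff.mp (hΔ i (by omega)))
    · exact hq i (by omega) n'

theorem RunChainLinked.of_five {n' : ℕ} {P₀ P₁ P₂ P₃ P₄ : ℕ → M}
    (h₀ : P₀ ∈ GameRun T) (h₁ : P₁ ∈ GameRun T) (h₂ : P₂ ∈ GameRun T)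
    (h₃ : P₃ ∈ GameRun T) (h₄ : P₄ ∈ GameRun T)
    (h₀₁ : runPre P₀ n' = runPre P₁ n') (h₁₂ : ∀ m, q (runPre P₁ m) = q (runPre P₂ m))
    (h₂₃ : runPre P₂ n' = runPre P₃ n') (h₃₄ : ∀ m, q (runPre P₃ m) = q (runPre P₄ m)) :
    RunChainLinked T q n' (runPre P₀ n') (runPre P₄ n') := by
  refine ⟨4, fun i => [P₀, P₁, P₂, P₃, P₄].getD i P₄, fun i hi => ?_, rfl, rfl, fun i hi => ?_,
    fun i hi => ?_⟩
  · interval_cases i <;> assumption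
  · obtain rfl | rfl : i = 0 ∨ i = 1 := by omega
    all_goals simpa [le_runDelta_iff]
  · obtain rfl | rfl : i = 0 ∨ i = 1 := by omega
    all_goals simpa

theorem chronQuotient_of_runChainLinked (hsurj : ∀ s ∈ Q, ∃ t ∈ T, q t = s)
    (hlinked : ∀ n' : ℕ, ∀ t ∈ T, ∀ s ∈ T, t.length = n' → s.length = n' → q t = q s →
      RunChainLinked T q n' t s) :
    ChronQuotient T Q q :=
  ⟨hsurj, fun n' t ht s hs htn hsn =>
    ⟨hlinked n' t ht s hs htn hsn, RunChainLinked.map_eq⟩⟩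

theorem chronQuotient_of_strictChronQuotient (hT : IsGameTree T) (hq : IsChron T Q q)
    (hsurj : ∀ s ∈ Q, ∃ t ∈ T, q t = s) (hstrict : StrictChronQuotient T Q q) :
    ChronQuotient T Q q := by
  refine chronQuotient_of_runChainLinked hsurj fun n' t ht s hs htn hsn hts => ?_
  obtain ⟨Rt, hRt, hRt_pre⟩ := hT.exists_run_runPre_eq ht
  obtain ⟨Rs, hRs, hRs_pre⟩ := hT.exists_run_runPre_eq hs
  rw [htn] at hRt_pre
  rw [hsn] at hRs_pre
  obtain ⟨St, hSt, hRSt⟩ := hq.exists_run_runPre_eq_map hRt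
  obtain ⟨Ss, hSs, hRSs⟩ := hq.exists_run_runPre_eq_map hRs
  obtain ⟨S, hS, S', hS', hSSt, hS'Ss, hΔ⟩ := hstrict.exists_lifts_runDelta_eq hSt hSs
  have hSS' : runPre S n' = runPre S' n' := by
    rw [← le_runDelta_iff, hΔ, le_runDelta_iff, hRSt, hRSs, hRt_pre, hRs_pre, hts]
  rw [← hRt_pre, ← hRs_pre]
  exact .of_five hRt hRt hS hS' hRs rfl (fun m => by rw [← hRSt, hSSt]) hSS'
    (fun m => by rw [← hS'Ss, hRSs])

end Chains

section PrefixTrees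

variable {M N : Type*}

def prefixTree (F : Set (ℕ → M)) : Set (List M) :=
  {t | ∃ R ∈ F, ∃ k, t = runPre R k}

variable {F : Set (ℕ → M)}

theorem isGameTree_prefixTree (F : Set (ℕ → M)) : IsGameTree (prefixTree F) := by
  constructor
  · rintro t ⟨R, hR, k, rfl⟩ j -
    exact ⟨R, hR, _, runPre_take R k j⟩
  · rintro t ⟨R, hR, k, rfl⟩
    exact ⟨R k, R, hR, k + 1, (runPre_succ R k).symm⟩

theorem mem_gameRun_prefixTree {R : ℕ → M} (hR : R ∈ F) : R ∈ GameRun (prefixTree F) :=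
  fun n => ⟨R, hR, n, rfl⟩

theorem exists_runPre_eq_of_mem_prefixTree {t : List M} (ht : t ∈ prefixTree F) :
    ∃ R ∈ F, runPre R t.length = t := by
  obtain ⟨R, hR, k, rfl⟩ := ht
  exact ⟨R, hR, by rw [runPre_length]⟩

theorem isChron_prefixTree_image {Φ : (ℕ → M) → ℕ → N} {φ : List M → List N}
    (hφ : ∀ R k, φ (runPre R k) = runPre (Φ R) k) :
    IsChron (prefixTree F) (prefixTree (Φ '' F)) φ := by
  refine ⟨?_, ?_, ?_⟩
  · rintro t ⟨R, hR, k, rfl⟩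
    exact ⟨Φ R, Set.mem_image_of_mem Φ hR, k, hφ R k⟩
  · rintro t ⟨R, -, k, rfl⟩
    rw [hφ, runPre_length, runPre_length]
  · rintro t ⟨R, -, k, rfl⟩ j -
    rw [runPre_take, hφ, hφ, runPre_take]

theorem surjOn_prefixTree_image {Φ : (ℕ → M) → ℕ → N} {φ : List M → List N}
    (hφ : ∀ R k, φ (runPre R k) = runPre (Φ R) k) :
    Set.SurjOn φ (prefixTree F) (prefixTree (Φ '' F)) := by
  rintro s ⟨-, ⟨R, hR, rfl⟩, k, rfl⟩
  exact ⟨runPre R k, ⟨R, hR, k, rfl⟩, hφ R k⟩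

theorem runPre_update_zero (R : ℕ → M) (x : M) (k : ℕ) :
    runPre (Function.update R 0 x) k = (runPre R k).set 0 x :=
  List.ext_getElem (by simp) fun i _ _ => by
    simp [List.getElem_set, Function.update_apply, eq_comm]

end PrefixTrees

namespace BridgeExample

def pairRun (a b : ℕ) : ℕ → ℕ := fun i => if i = 0 then a else if i = 1 then b else 0

@[simp]
theorem update_pairRun_zero (a b c : ℕ) : Function.update (pairRun a b) 0 c = pairRun c b := by
  funext i
  by_cases hi : i = 0 <;> simp [pairRun, hi]

def runs : Set (ℕ → ℕ) := {pairRun 0 0, pairRun 1 1, pairRun 0 2, pairRun 1 2}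

def eraseHead (R : ℕ → ℕ) : ℕ → ℕ := Function.update R 0 0

abbrev T : Set (List ℕ) := prefixTree runs

abbrev Q : Set (List ℕ) := prefixTree (eraseHead '' runs)

abbrev q (t : List ℕ) : List ℕ := t.set 0 0

theorem q_runPre (R : ℕ → ℕ) (k : ℕ) : q (runPre R k) = runPre (eraseHead R) k :=
  (runPre_update_zero R 0 k).symm

theorem eraseHead_eq_of_apply_one_eq {W W' : ℕ → ℕ} (hW : W ∈ runs) (hW' : W' ∈ runs)
    (h : W 1 = W' 1) : eraseHead W = eraseHead W' := by
  simp only [runs, Set.mem_insert_iff, Set.mem_singleton_iff] at hW hW'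
  rcases hW with rfl | rfl | rfl | rfl <;> rcases hW' with rfl | rfl | rfl | rfl <;>
    simp_all [eraseHead, pairRun]

theorem pairRun_apply_zero_two_mem {W : ℕ → ℕ} (hW : W ∈ runs) : pairRun (W 0) 2 ∈ runs := by
  simp only [runs, Set.mem_insert_iff, Set.mem_singleton_iff] at hW ⊢
  rcases hW with rfl | rfl | rfl | rfl <;> simp [pairRun]

theorem apply_zero_eq_apply_one {R : ℕ → ℕ} (hR : R ∈ GameRun T) (h : R 1 ≠ 2) : R 0 = R 1 := by
  obtain ⟨W, hW, hRW⟩ := exists_runPre_eq_of_mem_prefixTree (hR 2)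
  rw [runPre_length, runPre_eq_runPre_iff] at hRW
  rw [← hRW 1 (by omega)] at h
  rw [← hRW 0 (by omega), ← hRW 1 (by omega)]
  simp only [runs, Set.mem_insert_iff, Set.mem_singleton_iff] at hW
  rcases hW with rfl | rfl | rfl | rfl <;> simp_all [pairRun]

theorem chronQuotient : ChronQuotient T Q q := by
  refine chronQuotient_of_runChainLinked (surjOn_prefixTree_image q_runPre)
    fun n t ht s hs htn hsn hts => ?_
  obtain ⟨W, hW, hWt⟩ := exists_runPre_eq_of_mem_prefixTree ht
  obtain ⟨W', hW', hW's⟩ := exists_runPre_eq_of_mem_prefixTree hs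
  rw [htn] at hWt
  rw [hsn] at hW's
  subst hWt hW's
  have hmemW := mem_gameRun_prefixTree hW
  have hmemW' := mem_gameRun_prefixTree hW'
  rcases Nat.lt_or_ge n 2 with hn | hn
  · have hbridge : ∀ V, runPre V n = runPre (pairRun (V 0) 2) n := fun V =>
      runPre_eq_runPre_iff.mpr fun i hi => by
        obtain rfl : i = 0 := by omega
        simp [pairRun]
    exact .of_five hmemW (mem_gameRun_prefixTree (pairRun_apply_zero_two_mem hW))
      (mem_gameRun_prefixTree (pairRun_apply_zero_two_mem hW')) hmemW' hmemW' (hbridge W)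
      (fun m => by simp only [q_runPre, eraseHead, update_pairRun_zero]) (hbridge W').symm
      fun _ => rfl
  · have h₁ : W 1 = W' 1 := by
      rw [q_runPre, q_runPre, runPre_eq_runPre_iff] at hts
      simpa [eraseHead] using hts 1 hn
    exact .of_five hmemW hmemW hmemW' hmemW' hmemW' rfl
      (fun m => by rw [q_runPre, q_runPre, eraseHead_eq_of_apply_one_eq hW hW' h₁]) rfl
      fun _ => rfl

theorem apply_zero_of_lift {R : ℕ → ℕ} {b : ℕ} (hR : R ∈ GameRun T)
    (hlift : ∀ n, runPre (pairRun 0 b) n = q (runPre R n)) (hb : b ≠ 2) : R 0 = b := by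
  have h₁ : b = R 1 := by
    have h := hlift 2
    rw [q_runPre, runPre_eq_runPre_iff] at h
    simpa [pairRun, eraseHead] using h 1 (by omega)
  subst h₁
  exact apply_zero_eq_apply_one hR hb

theorem not_strictChronQuotient : ¬ StrictChronQuotient T Q q := by
  intro hstrict
  have hA : pairRun 0 0 ∈ GameRun Q :=
    mem_gameRun_prefixTree ⟨pairRun 0 0, by simp [runs], by simp [eraseHead]⟩
  have hB : pairRun 0 1 ∈ GameRun Q :=
    mem_gameRun_prefixTree ⟨pairRun 1 1, by simp [runs], by simp [eraseHead]⟩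
  have hAB : pairRun 0 0 ≠ pairRun 0 1 := fun h => by simpa [pairRun] using congrFun h 1
  obtain ⟨R, hR, S, hS, hRA, hSB, hΔ⟩ := hstrict.2 _ hA _ hB hAB
  have hRS : runPre R 1 = runPre S 1 := by
    rw [← le_runDelta_iff, hΔ, le_runDelta_iff, runPre_eq_runPre_iff]
    simp [pairRun]
  have h₀ := runPre_eq_runPre_iff.mp hRS 0 one_pos
  rw [apply_zero_of_lift hR hRA (by decide), apply_zero_of_lift hS hSB (by decide)] at h₀
  exact zero_ne_one h₀

end BridgeExample

theorem strict_quotient_is_quotient_not_conversely :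
    (∀ (M N : Type) (T : Set (List M)) (Q : Set (List N)) (q : List M → List N),
        IsGameTree T → IsGameTree Q → IsChron T Q q → (∀ s ∈ Q, ∃ t ∈ T, q t = s) →
        StrictChronQuotient T Q q → ChronQuotient T Q q) ∧
    (∃ (T Q : Set (List ℕ)) (q : List ℕ → List ℕ),
        IsGameTree T ∧ IsGameTree Q ∧ IsChron T Q q ∧ (∀ s ∈ Q, ∃ t ∈ T, q t = s) ∧
        ChronQuotient T Q q ∧ ¬ StrictChronQuotient T Q q) :=
  ⟨fun _ _ _ _ _ hT _ hq hsurj hstrict =>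
      chronQuotient_of_strictChronQuotient hT hq hsurj hstrict,
    BridgeExample.T, BridgeExample.Q, BridgeExample.q, isGameTree_prefixTree _,
      isGameTree_prefixTree _, isChron_prefixTree_image BridgeExample.q_runPre,
      surjOn_prefixTree_image BridgeExample.q_runPre, BridgeExample.chronQuotient,
      BridgeExample.not_strictChronQuotient⟩
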